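/- arXiv:1908.07070 — 2 statements merged into one kernel-verified Lean document; each statement's English description precedes it below -/
import Mathlib

section
/- Let A be a real m×n matrix with n ≥ 1 and b ∈ ℝᵐ, and set H = AᵀA, g = Aᵀb. Then the quadratic eigenvalue problem arising from the KKT conditions has a real solution: there exists λ ∈ ℝ with det(λ²I − 2λH + H² − g gᵀ) = 0. -/
/-!
With `H` symmetric, the determinant in question is `p t = det ((t • 1 - H)² - g gᵀ)`, continuous
in `t`. For symmetric invertible `S` and `u = S⁻¹ g` one has `S² - g gᵀ = S (1 - u uᵀ) S`, so
`det (S² - g gᵀ) = det S ² (1 - ‖u‖²) ≤ det S ²`; by density of invertible matrices this holds for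
every symmetric `S`. At an eigenvalue `μ` of `H` it gives `p μ ≤ 0`, while
`p t = t ^ (2n) det (1 + O(1/t)) > 0` for large `t`. The intermediate value theorem yields a root.
-/

open Matrix Filter Topology

namespace Matrix

variable {ι : Type*} [Fintype ι] [DecidableEq ι]

theorem det_one_sub_vecMulVec (u v : ι → ℝ) : (1 - vecMulVec u v).det = 1 - v ⬝ᵥ u := by
  rw [sub_eq_add_neg, ← neg_vecMulVec, vecMulVec_eq Unit,
    det_one_add_replicateCol_mul_replicateRow, dotProduct_neg, ← sub_eq_add_neg]

theorem det_mul_self_sub_vecMulVec_le_of_isUnit {S : Matrix ι ι ℝ} (hS : Sᵀ = S)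
    (hdet : IsUnit S.det) (g : ι → ℝ) :
    (S * S - vecMulVec g g).det ≤ S.det ^ 2 := by
  set u := S⁻¹ *ᵥ g
  have hSu : S *ᵥ u = g := by rw [mulVec_mulVec, mul_nonsing_inv S hdet, one_mulVec]
  have huS : u ᵥ* S = g := by rw [← mulVec_transpose, hS, hSu]
  have hfactor : S * S - vecMulVec g g = S * (1 - vecMulVec u u) * S := by
    rw [mul_sub, sub_mul, mul_one, mul_vecMulVec, vecMulVec_mul, hSu, huS]
  have hu : 0 ≤ u ⬝ᵥ u := by simpa using dotProduct_self_star_nonneg u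
  rw [hfactor, det_mul, det_mul, det_one_sub_vecMulVec]
  nlinarith [sq_nonneg S.det]

theorem det_smul_one_add_eq_eval_charpoly (S : Matrix ι ι ℝ) (t : ℝ) :
    (t • 1 + S).det = (-S).charpoly.eval t := by
  rw [eval_charpoly, sub_neg_eq_add, smul_one_eq_diagonal, scalar_apply]

theorem dense_setOf_isUnit_det_smul_one_add (S : Matrix ι ι ℝ) :
    Dense {t : ℝ | IsUnit (t • 1 + S).det} := by
  have hfin : {t : ℝ | ¬IsUnit (t • 1 + S).det}.Finite := by
    refine (Polynomial.finite_setOfPred_isRoot (charpoly_monic (-S)).ne_zero).subset fun t ht => ?_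
    simpa [det_smul_one_add_eq_eval_charpoly] using ht
  simpa [Set.compl_ofPred] using hfin.countable.dense_compl ℝ

theorem det_mul_self_sub_vecMulVec_le {S : Matrix ι ι ℝ} (hS : Sᵀ = S) (g : ι → ℝ) :
    (S * S - vecMulVec g g).det ≤ S.det ^ 2 := by
  let T : ℝ → Matrix ι ι ℝ := fun t => t • 1 + S
  have hclosed : IsClosed {t | (T t * T t - vecMulVec g g).det ≤ (T t).det ^ 2} :=
    isClosed_le (by fun_prop) (by fun_prop)
  have hsub :
      {t : ℝ | IsUnit (T t).det} ⊆ {t | (T t * T t - vecMulVec g g).det ≤ (T t).det ^ 2} :=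
    fun t ht => det_mul_self_sub_vecMulVec_le_of_isUnit
      (by simp [T, transpose_add, transpose_smul, hS]) ht g
  have h0 := hclosed.closure_subset_iff.mpr hsub
    ((dense_setOf_isUnit_det_smul_one_add S).closure_eq ▸ Set.mem_univ (0 : ℝ))
  simpa [T] using h0

theorem eventually_det_sq_smul_one_add_smul_add_pos (B C : Matrix ι ι ℝ) :
    ∀ᶠ t : ℝ in atTop, 0 < (t ^ 2 • (1 : Matrix ι ι ℝ) + t • B + C).det := by
  have hcont : Continuous fun s : ℝ => (1 + s • B + s ^ 2 • C).det := by fun_prop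
  have hnear : ∀ᶠ s in 𝓝 (0 : ℝ), 0 < (1 + s • B + s ^ 2 • C).det :=
    (hcont.tendsto 0).eventually (lt_mem_nhds (by simp))
  filter_upwards [tendsto_inv_atTop_zero.eventually hnear, eventually_gt_atTop 0] with t ht ht0
  have hrescale : t ^ 2 • (1 : Matrix ι ι ℝ) + t • B + C
      = t ^ 2 • (1 + t⁻¹ • B + t⁻¹ ^ 2 • C) := by
    simp only [smul_add, smul_smul]
    field_simp
    rw [one_smul]
  rw [hrescale, det_smul]
  positivity

theorem IsHermitian.exists_det_smul_one_sub_eq_zero [Nonempty ι] {H : Matrix ι ι ℝ}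
    (hH : H.IsHermitian) : ∃ μ : ℝ, (μ • 1 - H).det = 0 := by
  obtain ⟨i⟩ := ‹Nonempty ι›
  refine ⟨hH.eigenvalues i, exists_mulVec_eq_zero_iff.mp ⟨hH.eigenvectorBasis i, ?_, ?_⟩⟩
  · exact (WithLp.ofLp_eq_zero 2).ne.2 (hH.eigenvectorBasis.orthonormal.ne_zero i)
  · rw [sub_mulVec, smul_mulVec, one_mulVec, hH.mulVec_eigenvectorBasis, sub_self]

end Matrix

theorem stmt_6 (m n : ℕ) (hn : 1 ≤ n) (A : Matrix (Fin m) (Fin n) ℝ)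
    (b : Fin m → ℝ) :
    ∃ lam : ℝ,
      (lam ^ 2 • (1 : Matrix (Fin n) (Fin n) ℝ) - (2 * lam) • (Aᵀ * A)
        + (Aᵀ * A) ^ 2 - vecMulVec (Aᵀ.mulVec b) (Aᵀ.mulVec b)).det = 0 := by
  set H := Aᵀ * A
  set g := Aᵀ *ᵥ b
  have hHsymm : Hᵀ = H := by rw [transpose_mul, transpose_transpose]
  have hH : H.IsHermitian := by rwa [IsHermitian, conjTranspose_eq_transpose_of_trivial]
  have hsq (t : ℝ) : t ^ 2 • (1 : Matrix (Fin n) (Fin n) ℝ) - (2 * t) • H + H ^ 2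
      = (t • 1 - H) * (t • 1 - H) := by
    simp only [sq, sub_mul, mul_sub, smul_mul_assoc, mul_smul_comm, one_mul, mul_one]
    module
  have hcont : Continuous fun t : ℝ =>
      (t ^ 2 • (1 : Matrix (Fin n) (Fin n) ℝ) - (2 * t) • H + H ^ 2 - vecMulVec g g).det := by
    fun_prop
  have : Nonempty (Fin n) := ⟨⟨0, hn⟩⟩
  obtain ⟨μ, hμ⟩ := hH.exists_det_smul_one_sub_eq_zero
  have hneg : (μ ^ 2 • (1 : Matrix (Fin n) (Fin n) ℝ) - (2 * μ) • H + H ^ 2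
      - vecMulVec g g).det ≤ 0 := by
    rw [hsq, ← sq_eq_zero_iff.mpr hμ]
    exact det_mul_self_sub_vecMulVec_le
      (by rw [transpose_sub, transpose_smul, transpose_one, hHsymm]) g
  obtain ⟨Λ, hΛ⟩ :=
    (eventually_det_sq_smul_one_add_smul_add_pos (-2 • H) (H ^ 2 - vecMulVec g g)).exists
  have hpos : 0 < (Λ ^ 2 • (1 : Matrix (Fin n) (Fin n) ℝ) - (2 * Λ) • H + H ^ 2
      - vecMulVec g g).det := by
    convert hΛ using 2
    module
  exact intermediate_value_univ μ Λ hcont ⟨hneg, hpos.le⟩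
end

section
/- Let A be a real m×n matrix, b ∈ ℝᵐ, and suppose λ ∈ ℝ and u ∈ ℝⁿ satisfy the KKT conditions (AᵀA − λI)u = Aᵀb and uᵀu = 1. If AᵀA − λI is positive definite, then u is the unique global minimizer of ‖Av − b‖² over the unit sphere: for every v with ‖v‖ = 1 and v ≠ u, ‖Av − b‖² > ‖Au − b‖². -/
open Matrix

/-- The Euclidean norm of a vector in `ℝⁿ`. -/
noncomputable def euclNorm {k : ℕ} (x : Fin k → ℝ) : ℝ :=
  ‖(WithLp.equiv 2 (Fin k → ℝ)).symm x‖

/-! For unit vectors `u, v` and `M = AᵀA - λI`, the KKT equation `M u = Aᵀb` turns the gap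
`‖Av - b‖² - ‖Au - b‖²` into the quadratic form `(v - u)ᵀ M (v - u)`, which is positive when
`M` is positive definite and `v ≠ u`. -/

lemma euclNorm_sq {k : ℕ} (x : Fin k → ℝ) : euclNorm x ^ 2 = x ⬝ᵥ x := by
  rw [euclNorm, EuclideanSpace.norm_eq, Real.sq_sqrt (by positivity)]
  simp [dotProduct, sq]

section LeastSquares

variable {R ι κ : Type*} [CommRing R] [Fintype ι] [Fintype κ] [DecidableEq ι]

lemma dotProduct_gram_sub_smul_mulVec (A : Matrix κ ι R) (lam : R) (x y : ι → R) :
    x ⬝ᵥ (Aᵀ * A - lam • (1 : Matrix ι ι R)) *ᵥ y = A *ᵥ x ⬝ᵥ A *ᵥ y - lam * (x ⬝ᵥ y) := by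
  rw [sub_mulVec, ← mulVec_mulVec, smul_mulVec, one_mulVec, dotProduct_sub, dotProduct_smul,
    dotProduct_mulVec, vecMul_transpose, smul_eq_mul]

lemma residual_sq_sub_eq_of_kkt (A : Matrix κ ι R) (b : κ → R) (lam : R) (u v : ι → R)
    (hKKT : (Aᵀ * A - lam • (1 : Matrix ι ι R)) *ᵥ u = Aᵀ *ᵥ b) :
    (A *ᵥ v - b) ⬝ᵥ (A *ᵥ v - b) - (A *ᵥ u - b) ⬝ᵥ (A *ᵥ u - b) =
      (v - u) ⬝ᵥ (Aᵀ * A - lam • (1 : Matrix ι ι R)) *ᵥ (v - u)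
        + lam * (v ⬝ᵥ v - u ⬝ᵥ u) := by
  have kkt : ∀ x, A *ᵥ x ⬝ᵥ A *ᵥ u - lam * (x ⬝ᵥ u) = A *ᵥ x ⬝ᵥ b := fun x => by
    rw [← dotProduct_gram_sub_smul_mulVec, hKKT, dotProduct_transpose_mulVec, dotProduct_comm]
  have hv := kkt v
  have hu := kkt u
  rw [dotProduct_gram_sub_smul_mulVec, mulVec_sub]
  simp only [dotProduct_sub, sub_dotProduct, dotProduct_comm b, dotProduct_comm u v,
    dotProduct_comm (A *ᵥ u) (A *ᵥ v)] at hv ⊢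
  linear_combination 2 * hv - 2 * hu

end LeastSquares

theorem stmt_11 (m n : ℕ) (A : Matrix (Fin m) (Fin n) ℝ) (b : Fin m → ℝ)
    (lam : ℝ) (u : Fin n → ℝ)
    (hKKT : (Aᵀ * A - lam • (1 : Matrix (Fin n) (Fin n) ℝ)).mulVec u = Aᵀ.mulVec b)
    (hu : u ⬝ᵥ u = 1)
    (hpd : ∀ x : Fin n → ℝ, x ≠ 0 →
      0 < x ⬝ᵥ (Aᵀ * A - lam • (1 : Matrix (Fin n) (Fin n) ℝ)).mulVec x) :
    ∀ v : Fin n → ℝ, euclNorm v = 1 → v ≠ u →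
      euclNorm (A.mulVec u - b) ^ 2 < euclNorm (A.mulVec v - b) ^ 2 := by
  intro v hv_norm hvu
  have hv : v ⬝ᵥ v = 1 := by rw [← euclNorm_sq, hv_norm, one_pow]
  have gap := residual_sq_sub_eq_of_kkt A b lam u v hKKT
  rw [hu, hv, sub_self, mul_zero, add_zero] at gap
  rw [euclNorm_sq, euclNorm_sq, ← sub_pos, gap]
  exact hpd (v - u) (sub_ne_zero.mpr hvu)
end
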